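/- (Rotational equivariance of the pre/post-processed policy.) Let n ≥ 1 and let m : (Fin n → ℝ²) → ℝ² be an arbitrary function. For an observation O : Fin n → ℝ² with S(O) = Σ_j O j ≠ 0, define T_pre(O) j = Rot(ū(O))ᵀ ⬝ (O j) and F(O) = Rot(ū(O)) ⬝ m(T_pre(O)), where ū(O) = S(O)/‖S(O)‖. Then F is equivariant under planar rotations: for every rotation matrix R(θ), F(j ↦ R(θ) ⬝ O j) = R(θ) ⬝ F(O). -/

import Mathlib

open Matrix

/-- The planar rotation matrix `R(θ)`. -/
noncomputable def Rmat (θ : ℝ) : Matrix (Fin 2) (Fin 2) ℝ :=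
  !![Real.cos θ, -Real.sin θ; Real.sin θ, Real.cos θ]

/-- For a unit vector `u = (u₁, u₂) ∈ ℝ²`, the rotation matrix
`Rot(u) = ![![u₁, −u₂], ![u₂, u₁]]` sending `e₁ = (1,0)` to `u`. -/
def Rot (u : Fin 2 → ℝ) : Matrix (Fin 2) (Fin 2) ℝ :=
  !![u 0, -(u 1); u 1, u 0]

/-- A `2 × 2` matrix acting on a vector of the Euclidean plane
by matrix–vector multiplication. -/
noncomputable def mvE (M : Matrix (Fin 2) (Fin 2) ℝ) (v : EuclideanSpace ℝ (Fin 2)) :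
    EuclideanSpace ℝ (Fin 2) :=
  WithLp.toLp 2 (M.mulVec v)

/-- The sum `S(O) = Σ_j O j` of an observation. -/
noncomputable def obsSum {n : ℕ} (O : Fin n → EuclideanSpace ℝ (Fin 2)) :
    EuclideanSpace ℝ (Fin 2) :=
  ∑ j, O j

/-- The normalized sum `ū(O) = S(O)/‖S(O)‖` of an observation. -/
noncomputable def ubar {n : ℕ} (O : Fin n → EuclideanSpace ℝ (Fin 2)) :
    EuclideanSpace ℝ (Fin 2) :=
  ‖obsSum O‖⁻¹ • obsSum O

/-- The preprocessing transformation `T_pre(O) j = Rot(ū(O))ᵀ ⬝ (O j)`. -/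
noncomputable def Tpre {n : ℕ} (O : Fin n → EuclideanSpace ℝ (Fin 2)) :
    Fin n → EuclideanSpace ℝ (Fin 2) :=
  fun j => mvE (Rot (ubar O))ᵀ (O j)

/-- The pre/post-processed policy `F(O) = Rot(ū(O)) ⬝ m(T_pre(O))` built from an
arbitrary function `m`. -/
noncomputable def F {n : ℕ} (m : (Fin n → EuclideanSpace ℝ (Fin 2)) → EuclideanSpace ℝ (Fin 2))
    (O : Fin n → EuclideanSpace ℝ (Fin 2)) : EuclideanSpace ℝ (Fin 2) :=
  mvE (Rot (ubar O)) (m (Tpre O))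

/-! `Rot u` is multiplication by the complex number `u 0 + u 1 i` and `Rmat θ = Rot (cos θ, sin θ)`.
Rotating the observation by `R = Rmat θ` rotates its sum, hence `ū`, by `R`, and since planar
rotations commute this turns `Rot ū` into `R * Rot ū`. Preprocessing then cancels `R`, as
`Rᵀ * R = 1`, and post-processing puts it back in front. -/

lemma mvE_mvE (M N : Matrix (Fin 2) (Fin 2) ℝ) (v : EuclideanSpace ℝ (Fin 2)) :
    mvE M (mvE N v) = mvE (M * N) v := by
  simp only [mvE, WithLp.ofLp_toLp, mulVec_mulVec]

lemma mvE_smul (M : Matrix (Fin 2) (Fin 2) ℝ) (a : ℝ) (v : EuclideanSpace ℝ (Fin 2)) :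
    mvE M (a • v) = a • mvE M v := by
  simp only [mvE, WithLp.ofLp_smul, mulVec_smul, WithLp.toLp_smul]

lemma mvE_sum {ι : Type*} (s : Finset ι) (M : Matrix (Fin 2) (Fin 2) ℝ)
    (v : ι → EuclideanSpace ℝ (Fin 2)) :
    mvE M (∑ i ∈ s, v i) = ∑ i ∈ s, mvE M (v i) := by
  simp only [mvE, WithLp.ofLp_sum, mulVec_sum, WithLp.toLp_sum]

lemma norm_mvE_of_transpose_mul_self {M : Matrix (Fin 2) (Fin 2) ℝ} (hM : Mᵀ * M = 1)
    (v : EuclideanSpace ℝ (Fin 2)) : ‖mvE M v‖ = ‖v‖ := by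
  rw [← pow_left_inj₀ (norm_nonneg _) (norm_nonneg _) two_ne_zero,
    ← real_inner_self_eq_norm_sq, ← real_inner_self_eq_norm_sq,
    EuclideanSpace.inner_eq_star_dotProduct, EuclideanSpace.inner_eq_star_dotProduct]
  simp only [mvE, WithLp.ofLp_toLp, star_trivial]
  rw [dotProduct_mulVec, ← vecMul_transpose, vecMul_vecMul, hM, vecMul_one]

lemma Rot_mulVec_Rot (u v : Fin 2 → ℝ) : Rot (Rot u *ᵥ v) = Rot u * Rot v := by
  simp only [Rot, mulVec_fin_two, mul_fin_two, of_apply, cons_val', cons_val_zero, cons_val_one,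
    empty_val', cons_val_fin_one]
  ring_nf

lemma transpose_Rot_mul_Rot (u : Fin 2 → ℝ) : (Rot u)ᵀ * Rot u = (u 0 ^ 2 + u 1 ^ 2) • 1 := by
  ext i j
  fin_cases i <;> fin_cases j <;>
    simp [Rot, mul_apply, Fin.sum_univ_two] <;> ring

lemma Rmat_eq_Rot (θ : ℝ) : Rmat θ = Rot ![Real.cos θ, Real.sin θ] := rfl

lemma transpose_Rmat_mul_Rmat (θ : ℝ) : (Rmat θ)ᵀ * Rmat θ = 1 := by
  simp [Rmat_eq_Rot, transpose_Rot_mul_Rot]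

lemma ubar_mvE {M : Matrix (Fin 2) (Fin 2) ℝ} (hM : Mᵀ * M = 1) {n : ℕ}
    (O : Fin n → EuclideanSpace ℝ (Fin 2)) :
    ubar (fun j => mvE M (O j)) = mvE M (ubar O) := by
  have hsum : obsSum (fun j => mvE M (O j)) = mvE M (obsSum O) := (mvE_sum _ M O).symm
  rw [ubar, ubar, hsum, norm_mvE_of_transpose_mul_self hM, mvE_smul]

lemma Rot_ubar_Rmat (θ : ℝ) {n : ℕ} (O : Fin n → EuclideanSpace ℝ (Fin 2)) :
    Rot (ubar (fun j => mvE (Rmat θ) (O j))) = Rmat θ * Rot (ubar O) := by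
  rw [ubar_mvE (transpose_Rmat_mul_Rmat θ), Rmat_eq_Rot]
  exact Rot_mulVec_Rot _ _

lemma Tpre_Rmat (θ : ℝ) {n : ℕ} (O : Fin n → EuclideanSpace ℝ (Fin 2)) :
    Tpre (fun j => mvE (Rmat θ) (O j)) = Tpre O := by
  funext j
  rw [Tpre, Tpre, Rot_ubar_Rmat, transpose_mul, mvE_mvE, Matrix.mul_assoc,
    transpose_Rmat_mul_Rmat, Matrix.mul_one]

theorem stmt6_general (n : ℕ)
    (m : (Fin n → EuclideanSpace ℝ (Fin 2)) → EuclideanSpace ℝ (Fin 2))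
    (O : Fin n → EuclideanSpace ℝ (Fin 2)) (θ : ℝ) :
    F m (fun j => mvE (Rmat θ) (O j)) = mvE (Rmat θ) (F m O) := by
  rw [F, F, Tpre_Rmat, Rot_ubar_Rmat, mvE_mvE]

/-- Rotational equivariance of the pre/post-processed policy: for any function `m`
and any observation `O` with nonzero sum,
`F(j ↦ R(θ) ⬝ O j) = R(θ) ⬝ F(O)` for every planar rotation matrix `R(θ)`. -/
theorem stmt6 (n : ℕ) (hn : 1 ≤ n)
    (m : (Fin n → EuclideanSpace ℝ (Fin 2)) → EuclideanSpace ℝ (Fin 2))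
    (O : Fin n → EuclideanSpace ℝ (Fin 2)) (hS : obsSum O ≠ 0) (θ : ℝ) :
    F m (fun j => mvE (Rmat θ) (O j)) = mvE (Rmat θ) (F m O) :=
  stmt6_general n m O θ
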